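/- For all positive integers m, n and all r ≥ 1, the two-variable specialisation H_r(1,m,n) of the rooted-hypermap generating polynomial satisfies the recursion H_r(1,m,n) = (1/(r−1)!) · m^{(r)} · n^{(r)} − Σ_{k=1}^{r−1} (1/k!) · m^{(k)} · n^{(k)} · H_{r−k}(1,m,n), where m^{(k)} = Γ(m+k)/Γ(m) is the ascending factorial. Equivalently, in integer form: h_r(1,m,n) = m^{(r)} n^{(r)} − Σ_{k=1}^{r−1} C(r−1,k) · m^{(k)} n^{(k)} · h_{r−k}(1,m,n). -/

import Mathlib

open Finset

/-- Number of cycles of a permutation, counting fixed points as cycles of length 1. -/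
def cyc {r : ℕ} (σ : Equiv.Perm (Fin r)) : ℕ :=
  σ.cycleType.card + (Finset.univ.filter fun x => σ x = x).card

/-- A pair of permutations is transitive if the subgroup they generate acts
transitively on `Fin r`. -/
def IsTransitivePair {r : ℕ} (σ τ : Equiv.Perm (Fin r)) : Prop :=
  ∀ x y : Fin r, ∃ g ∈ Subgroup.closure ({σ, τ} : Set (Equiv.Perm (Fin r))), g x = y

open Classical in
/-- `h_r(m,n,λ) = Σ_{transitive (σ,τ)} m^{cyc σ} n^{cyc τ} λ^{cyc((στ)⁻¹)}`. -/
noncomputable def hSum (r m n lam : ℕ) : ℕ :=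
  ∑ p ∈ Finset.univ.filter
      (fun p : Equiv.Perm (Fin r) × Equiv.Perm (Fin r) => IsTransitivePair p.1 p.2),
    m ^ cyc p.1 * n ^ cyc p.2 * lam ^ cyc (p.1 * p.2)⁻¹

/-- `H_r(m,n,λ) = h_r(m,n,λ)/(r-1)!`, the generating polynomial for rooted
hypermaps with `r` darts. -/
noncomputable def Hpoly (r m n lam : ℕ) : ℚ :=
  (hSum r m n lam : ℚ) / (r - 1).factorial

/-!
The number of colourings `α → Fin x` invariant under `σ` is `x ^ cyc σ`. Such counts are
multiplicative under disjoint unions, and inserting a new point into a permutation either adds a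
fixed point or lengthens a cycle, which gives `∑_σ x ^ cyc σ = x^{(N)}`. After the change of
variables `(σ, τ) ↦ (τ, (στ)⁻¹)` the sum of `m ^ cyc τ * n ^ cyc (στ)⁻¹` over all pairs therefore
factors as `m^{(N)} n^{(N)}`. On the other hand a pair `(σ, τ)` is the same as the orbit `S` of a
fixed point under `⟨σ, τ⟩`, a transitive pair on `S` and an arbitrary pair on the complement of
`S`; grouping by the size `k` of the complement gives
`m^{(N)} n^{(N)} = ∑_k C(N-1,k) m^{(k)} n^{(k)} h_{N-k}(1,m,n)`.
-/

open Equiv Equiv.Perm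

section FixedColorings

variable {α β : Type*}

noncomputable def fixedColorings (σ : Perm α) (x : ℕ) : ℕ :=
  Nat.card {f : α → Fin x // ∀ a, f (σ a) = f a}

theorem fixedColorings_permCongr (e : α ≃ β) (σ : Perm α) (x : ℕ) :
    fixedColorings (e.permCongr σ) x = fixedColorings σ x :=
  Nat.card_congr <| (e.arrowCongr (.refl _)).symm.subtypeEquiv fun f => by
    simp [e.forall_congr_left, permCongr_apply]

theorem fixedColorings_sumCongr (σ : Perm α) (τ : Perm β) (x : ℕ) :
    fixedColorings (σ.sumCongr τ) x = fixedColorings σ x * fixedColorings τ x := by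
  rw [fixedColorings, fixedColorings, fixedColorings, ← Nat.card_prod]
  refine Nat.card_congr <| ((sumArrowEquivProdArrow _ _ _).subtypeEquiv fun f => ?_).trans
    subtypeProdEquivProd
  simp [Sum.forall]

theorem fixedColorings_subtypeCongr {p : α → Prop} [DecidablePred p] (σ : Perm {a // p a})
    (τ : Perm {a // ¬p a}) (x : ℕ) :
    fixedColorings (σ.subtypeCongr τ) x = fixedColorings σ x * fixedColorings τ x := by
  rw [Perm.subtypeCongr, fixedColorings_permCongr, ← fixedColorings_sumCongr]

theorem fixedColorings_optionCongr (σ : Perm α) (x : ℕ) :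
    fixedColorings σ.optionCongr x = x * fixedColorings σ x := by
  have e : {f : Option α → Fin x // ∀ o, f (σ.optionCongr o) = f o} ≃
      {g : α → Fin x // ∀ a, g (σ a) = g a} × Fin x :=
    ((piOptionEquivProd.trans (prodComm _ _)).subtypeEquiv fun f => by
      simp [Option.forall]).trans prodSubtypeFstEquivSubtypeProd
  rw [fixedColorings, Nat.card_congr e, Nat.card_prod, Nat.card_eq_fintype_card (α := Fin x),
    Fintype.card_fin, fixedColorings, mul_comm]

/-- `swap none (some a) * σ.optionCongr` inserts `none` into the cycle of `σ` through `a`, so an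
invariant colouring is determined by its restriction to `α`. -/
theorem fixedColorings_swap_mul_optionCongr [DecidableEq α] (a : α) (σ : Perm α) (x : ℕ) :
    fixedColorings (swap none (some a) * σ.optionCongr) x = fixedColorings σ x := by
  refine Nat.card_congr
    { toFun f := ⟨f.1 ∘ some, fun b => ?_⟩
      invFun g := ⟨fun o => o.elim (g.1 a) g.1, fun o => ?_⟩
      left_inv f := Subtype.ext (funext fun o => ?_)
      right_inv g := rfl }
  · have hb := f.2 (some b)
    have hnone := f.2 none
    by_cases h : σ b = a
    · simp_all
    · simp_all [swap_apply_of_ne_of_ne]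
  · rcases o with _ | b
    · simp
    · by_cases h : σ b = a
      · simp [h, ← g.2 b]
      · simpa [h, swap_apply_of_ne_of_ne] using g.2 b
  · rcases o with _ | b
    · simpa using f.2 none
    · rfl

theorem Equiv.Perm.SameCycle.apply_eq_of_forall_apply_eq [Finite α] {γ : Type*} {σ : Perm α}
    {f : α → γ} (hf : ∀ a, f (σ a) = f a) {a b : α} (h : σ.SameCycle a b) : f b = f a := by
  obtain ⟨i, -, rfl⟩ := h.exists_pow_eq'
  clear h
  induction i with
  | zero => rfl
  | succ i ih => rw [pow_succ', mul_apply, hf, ih]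

variable [Fintype α] [DecidableEq α]

noncomputable def fixedColoringsEquiv (σ : Perm α) (x : ℕ) :
    {f : α → Fin x // ∀ a, f (σ a) = f a} ≃
      (σ.cycleFactorsFinset → Fin x) × ({a // σ a = a} → Fin x) where
  toFun f := (fun c => f.1 (mem_cycleFactorsFinset_iff.mp c.2).1.nonempty_support.choose,
    fun a => f.1 a)
  invFun u := ⟨fun a => if h : σ a = a then u.2 ⟨a, h⟩ else
      u.1 ⟨σ.cycleOf a, cycleOf_mem_cycleFactorsFinset_iff.mpr (mem_support.mpr h)⟩, fun a => by
    by_cases h : σ a = a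
    · simp [h]
    · simp [h, cycleOf_self_apply]⟩
  left_inv f := by
    refine Subtype.ext (funext fun a => ?_)
    by_cases h : σ a = a
    · simp [h]
    · have hc := cycleOf_mem_cycleFactorsFinset_iff.mpr (mem_support.mpr h)
      have hrep := (mem_cycleFactorsFinset_iff.mp hc).1.nonempty_support.choose_spec
      simp only [h, dite_false]
      exact SameCycle.apply_eq_of_forall_apply_eq f.2 (mem_support_cycleOf_iff.mp hrep).1
  right_inv u := by
    refine Prod.ext (funext fun ⟨c, hc⟩ => ?_) (funext fun ⟨a, ha⟩ => by simp [ha])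
    obtain ⟨hcycle, hsupp⟩ := mem_cycleFactorsFinset_iff.mp hc
    have hrep := hcycle.nonempty_support.choose_spec
    have hmoved : σ hcycle.nonempty_support.choose ≠ hcycle.nonempty_support.choose := by
      rwa [← hsupp _ hrep, ← mem_support]
    change dite _ _ _ = _
    rw [dif_neg hmoved]
    exact congrArg u.1 (Subtype.ext (cycle_is_cycleOf hrep hc).symm)

theorem fixedColorings_eq_pow (σ : Perm α) (x : ℕ) :
    fixedColorings σ x = x ^ (σ.cycleType.card + #{a | σ a = a}) := by
  rw [fixedColorings, Nat.card_congr (fixedColoringsEquiv σ x), Nat.card_prod,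
    Nat.card_fun, Nat.card_fun, pow_add, cycleType, Multiset.card_map]
  simp [Nat.card_eq_fintype_card, Fintype.card_subtype]

end FixedColorings

section SumFixedColorings

variable {α β : Type*} [Fintype α] [DecidableEq α] [Fintype β] [DecidableEq β]

theorem sum_fixedColorings_option (x : ℕ) :
    ∑ σ : Perm (Option α), fixedColorings σ x =
      (x + Fintype.card α) * ∑ σ : Perm α, fixedColorings σ x := by
  rw [← decomposeOption.symm.sum_comp, Fintype.sum_prod_type, Fintype.sum_option]
  simp [← Perm.one_def, fixedColorings_optionCongr, fixedColorings_swap_mul_optionCongr,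
    mul_sum, add_mul, sum_add_distrib]

theorem sum_fixedColorings_congr (e : α ≃ β) (x : ℕ) :
    ∑ σ : Perm α, fixedColorings σ x = ∑ σ : Perm β, fixedColorings σ x := by
  simp [← e.permCongr.sum_comp, fixedColorings_permCongr]

theorem sum_fixedColorings (x : ℕ) :
    ∑ σ : Perm α, fixedColorings σ x = x.ascFactorial (Fintype.card α) := by
  revert ‹DecidableEq α›
  refine Fintype.induction_empty_option (P := fun α _ => ∀ [DecidableEq α],
      ∑ σ : Perm α, fixedColorings σ x = x.ascFactorial (Fintype.card α))
    (fun α β _ e ih _ => ?_) ?_ (fun α _ ih _ => ?_) α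
  · let _ : Fintype α := Fintype.ofEquiv β e.symm
    classical
    rw [← Fintype.card_congr e, ← ih]
    convert (sum_fixedColorings_congr e x).symm
  · simp [fixedColorings]
  · classical
    rw [Fintype.card_option, Nat.ascFactorial_succ, ← ih]
    convert sum_fixedColorings_option x

end SumFixedColorings

section PairWeight

variable {α β : Type*}

noncomputable def pairWeight (m n : ℕ) (q : Perm α × Perm α) : ℕ :=
  fixedColorings q.2 m * fixedColorings (q.1 * q.2)⁻¹ n

theorem pairWeight_subtypeCongr {p : α → Prop} [DecidablePred p] (m n : ℕ)
    (a b : Perm {x // p x}) (c d : Perm {x // ¬p x}) :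
    pairWeight m n (a.subtypeCongr c, b.subtypeCongr d) =
      pairWeight m n (a, b) * pairWeight m n (c, d) := by
  have hom (a' c') : a'.subtypeCongr c' = subtypeCongrHom p (a', c') := rfl
  simp only [pairWeight, hom, ← map_mul, ← map_inv, Prod.mk_mul_mk, Prod.inv_mk]
  simp only [subtypeCongrHom_apply, fixedColorings_subtypeCongr]
  ring

theorem pairWeight_permCongr (e : α ≃ β) (m n : ℕ) (q : Perm α × Perm α) :
    pairWeight m n (e.permCongr q.1, e.permCongr q.2) = pairWeight m n q := by
  have hom (σ) : e.permCongr σ = e.permCongrHom σ := rfl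
  simp only [pairWeight, hom, ← map_mul, ← map_inv]
  simp only [← hom, fixedColorings_permCongr]

theorem sum_pairWeight [Fintype α] [DecidableEq α] (m n : ℕ) :
    ∑ q : Perm α × Perm α, pairWeight m n q =
      m.ascFactorial (Fintype.card α) * n.ascFactorial (Fintype.card α) := by
  rw [← sum_fixedColorings m, ← sum_fixedColorings n, sum_mul_sum, ← Fintype.sum_prod_type']
  exact Fintype.sum_equiv
    ⟨fun q => (q.2, (q.1 * q.2)⁻¹), fun q => ((q.1 * q.2)⁻¹, q.1),
      fun q => by simp, fun q => by simp⟩ _ _ fun _ => rfl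

end PairWeight

section Orbits

open MulAction Subgroup

variable {α β : Type*}

theorem isPretransitive_subgroup_iff {H : Subgroup (Perm α)} :
    IsPretransitive H α ↔ ∀ x y : α, ∃ g ∈ H, g x = y := by
  simp [isPretransitive_iff, Subgroup.mk_smul, Perm.smul_def]

theorem Subgroup.map_closure_pair {G H : Type*} [Group G] [Group H] (f : G →* H) (a b : G) :
    (closure {a, b}).map f = closure {f a, f b} := by
  rw [MonoidHom.map_closure, Set.image_pair]

theorem isPretransitive_closure_permCongr (e : α ≃ β) (σ τ : Perm α) :
    IsPretransitive (closure {e.permCongr σ, e.permCongr τ}) β ↔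
      IsPretransitive (closure {σ, τ}) α := by
  have h : closure {e.permCongr σ, e.permCongr τ} =
      (closure {σ, τ}).map e.permCongrHom.toMonoidHom := by
    rw [map_closure_pair]; rfl
  rw [h, isPretransitive_subgroup_iff, isPretransitive_subgroup_iff]
  simp [permCongr_apply, ← e.eq_symm_apply, e.symm.forall_congr_left]

theorem apply_mem_orbit_iff {H : Subgroup (Perm α)} {g : Perm α} (hg : g ∈ H) {x y : α} :
    g y ∈ orbit H x ↔ y ∈ orbit H x := by
  rw [← orbit_eq_iff, ← orbit_eq_iff]
  change orbit H ((⟨g, hg⟩ : H) • y) = _ ↔ _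
  rw [orbit_smul]

variable {p : α → Prop} [DecidablePred p]

theorem Equiv.Perm.exists_subtypeCongr_eq {σ : Perm α} (h : ∀ x, p (σ x) ↔ p x) :
    ∃ (a : Perm {x // p x}) (c : Perm {x // ¬p x}), a.subtypeCongr c = σ :=
  ⟨σ.subtypePerm h, σ.subtypePerm fun x => not_congr (h x),
    Equiv.ext fun x => by by_cases hx : p x <;> simp [hx]⟩

theorem orbit_closure_subtypeCongr (a b : Perm {x // p x}) (c d : Perm {x // ¬p x})
    (x : {x // p x}) :
    orbit (closure {a.subtypeCongr c, b.subtypeCongr d}) (x : α) =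
      Subtype.val '' orbit (closure {a, b}) x := by
  have hα : closure {a.subtypeCongr c, b.subtypeCongr d} =
      (closure {(a, c), (b, d)}).map (subtypeCongrHom p) := by
    rw [map_closure_pair]; rfl
  have hp : closure {a, b} = (closure {(a, c), (b, d)}).map (MonoidHom.fst _ _) := by
    rw [map_closure_pair]; rfl
  ext y
  simp [hα, hp, mem_orbit_iff, Perm.smul_def]

theorem orbit_closure_subtypeCongr_eq_iff (a b : Perm {x // p x}) (c d : Perm {x // ¬p x})
    (x : {x // p x}) :
    orbit (closure {a.subtypeCongr c, b.subtypeCongr d}) (x : α) = {y | p y} ↔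
      IsPretransitive (closure {a, b}) {x // p x} := by
  rw [orbit_closure_subtypeCongr, isPretransitive_iff_orbit_eq_univ x,
    ← Subtype.range_coe_subtype, ← Set.image_univ]
  exact (Set.image_injective.mpr Subtype.val_injective).eq_iff

end Orbits

section OrbitDecomposition

open MulAction Subgroup

variable {α : Type*} [Fintype α] [DecidableEq α] {M : Type*} [AddCommMonoid M]

open Classical in
theorem sum_filter_orbit_eq {x₀ : α} {S : Finset α} (hx₀ : x₀ ∈ S) (F : Perm α × Perm α → M) :
    ∑ q ∈ univ.filter (fun q : Perm α × Perm α => orbit (closure {q.1, q.2}) x₀ = S), F q =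
      ∑ ab ∈ univ.filter fun ab : Perm {x // x ∈ S} × Perm {x // x ∈ S} =>
          IsPretransitive (closure {ab.1, ab.2}) {x // x ∈ S},
        ∑ cd : Perm {x // x ∉ S} × Perm {x // x ∉ S},
          F (ab.1.subtypeCongr cd.1, ab.2.subtypeCongr cd.2) := by
  rw [← sum_product']
  symm
  refine sum_nbij (fun w => (w.1.1.subtypeCongr w.2.1, w.1.2.subtypeCongr w.2.2)) ?_ ?_ ?_
    fun _ _ => rfl
  · rintro ⟨⟨a, b⟩, c, d⟩ hw
    simp only [mem_product, mem_filter, mem_univ, true_and, and_true] at hw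
    simpa using (orbit_closure_subtypeCongr_eq_iff a b c d ⟨x₀, hx₀⟩).mpr hw
  · rintro ⟨⟨a, b⟩, c, d⟩ - ⟨⟨a', b'⟩, c', d'⟩ - h
    simp only [Prod.mk.injEq] at h
    have h₁ := subtypeCongrHom_injective (· ∈ S) (a₁ := (a, c)) (a₂ := (a', c')) h.1
    have h₂ := subtypeCongrHom_injective (· ∈ S) (a₁ := (b, d)) (a₂ := (b', d')) h.2
    simp_all
  · rintro ⟨σ, τ⟩ hq
    simp only [coe_filter, mem_univ, true_and, Set.mem_ofPred_eq] at hq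
    have hσ (y : α) : σ y ∈ S ↔ y ∈ S := by
      simpa [hq] using apply_mem_orbit_iff (x := x₀) (y := y)
        (subset_closure (by simp) : σ ∈ closure {σ, τ})
    have hτ (y : α) : τ y ∈ S ↔ y ∈ S := by
      simpa [hq] using apply_mem_orbit_iff (x := x₀) (y := y)
        (subset_closure (by simp) : τ ∈ closure {σ, τ})
    obtain ⟨a, c, rfl⟩ := exists_subtypeCongr_eq hσ
    obtain ⟨b, d, rfl⟩ := exists_subtypeCongr_eq hτ
    refine ⟨((a, b), c, d), ?_, rfl⟩
    simpa using (orbit_closure_subtypeCongr_eq_iff a b c d ⟨x₀, hx₀⟩).mp hq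

open Classical in
theorem sum_eq_sum_orbit (x₀ : α) (F : Perm α × Perm α → M) :
    ∑ q, F q = ∑ S ∈ univ.filter fun S : Finset α => x₀ ∈ S,
      ∑ ab ∈ univ.filter fun ab : Perm {x // x ∈ S} × Perm {x // x ∈ S} =>
          IsPretransitive (closure {ab.1, ab.2}) {x // x ∈ S},
        ∑ cd : Perm {x // x ∉ S} × Perm {x // x ∉ S},
          F (ab.1.subtypeCongr cd.1, ab.2.subtypeCongr cd.2) := by
  rw [← sum_fiberwise_of_maps_to (g := fun q => (orbit (closure {q.1, q.2}) x₀).toFinset)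
    (t := univ.filter (x₀ ∈ ·)) fun q _ => by simp [mem_orbit_self]]
  refine sum_congr rfl fun S hS => ?_
  rw [← sum_filter_orbit_eq (mem_filter.mp hS).2]
  refine sum_congr (filter_congr fun q _ => ?_) fun _ _ => rfl
  rw [← coe_inj, Set.coe_toFinset]

theorem sum_filter_mem_apply_card_compl (x₀ : α) (f : ℕ → M) :
    ∑ S ∈ univ.filter (fun S : Finset α => x₀ ∈ S), f (Fintype.card α - #S) =
      ∑ k ∈ range (Fintype.card α), (Fintype.card α - 1).choose k • f k := by
  have hpos : 0 < Fintype.card α := Fintype.card_pos_iff.mpr ⟨x₀⟩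
  calc _ = ∑ T ∈ (univ.erase x₀).powerset, f #T :=
        sum_nbij' compl compl (fun S hS => by simpa [subset_erase] using hS)
          (fun T hT => by simpa [subset_erase] using hT) (fun S _ => compl_compl S)
          (fun T _ => compl_compl T) (fun S _ => by rw [card_compl])
    _ = _ := by
      rw [sum_powerset_apply_card, card_erase_of_mem (mem_univ x₀), card_univ,
        Nat.sub_add_cancel hpos]

end OrbitDecomposition

section TransitiveWeight

open MulAction Subgroup

variable {α β : Type*} [Fintype α] [DecidableEq α] [Fintype β] [DecidableEq β]

open Classical in
noncomputable def transitiveWeight (α : Type*) [Fintype α] [DecidableEq α] (m n : ℕ) : ℕ :=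
  ∑ q ∈ univ.filter fun q : Perm α × Perm α => IsPretransitive (closure {q.1, q.2}) α,
    pairWeight m n q

theorem transitiveWeight_congr (e : α ≃ β) (m n : ℕ) :
    transitiveWeight α m n = transitiveWeight β m n :=
  sum_equiv (e.permCongr.prodCongr e.permCongr)
    (fun q => by simp [isPretransitive_closure_permCongr])
    fun q _ => (pairWeight_permCongr e m n q).symm

theorem hSum_one_eq_transitiveWeight (r m n : ℕ) :
    hSum r 1 m n = transitiveWeight (Fin r) m n := by
  classical
  refine sum_congr (filter_congr fun q _ => isPretransitive_subgroup_iff.symm) fun q _ => ?_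
  rw [pairWeight, fixedColorings_eq_pow, fixedColorings_eq_pow, one_pow, one_mul]
  rfl

theorem ascFactorial_mul_ascFactorial_eq_sum (x₀ : α) (m n : ℕ) :
    m.ascFactorial (Fintype.card α) * n.ascFactorial (Fintype.card α) =
      ∑ k ∈ range (Fintype.card α), (Fintype.card α - 1).choose k *
        (m.ascFactorial k * n.ascFactorial k * hSum (Fintype.card α - k) 1 m n) := by
  simp only [← smul_eq_mul (a := (Fintype.card α - 1).choose _),
    ← sum_filter_mem_apply_card_compl x₀, ← sum_pairWeight, sum_eq_sum_orbit x₀,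
    pairWeight_subtypeCongr, ← sum_mul_sum]
  refine sum_congr rfl fun S _ => ?_
  change transitiveWeight _ m n * _ = _
  rw [sum_pairWeight, transitiveWeight_congr S.equivFin, ← hSum_one_eq_transitiveWeight,
    Fintype.card_subtype_compl, Fintype.card_coe, Nat.sub_sub_self (card_le_univ S), mul_comm]

end TransitiveWeight

theorem hSum_one_add_sum_eq_ascFactorial_mul (m n r : ℕ) (hr : 1 ≤ r) :
    hSum r 1 m n + ∑ k ∈ Icc 1 (r - 1), (r - 1).choose k * m.ascFactorial k * n.ascFactorial k *
      hSum (r - k) 1 m n = m.ascFactorial r * n.ascFactorial r := by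
  obtain ⟨s, rfl⟩ : ∃ s, r = s + 1 := ⟨r - 1, by omega⟩
  have h := ascFactorial_mul_ascFactorial_eq_sum (0 : Fin (s + 1)) m n
  rw [Fintype.card_fin, sum_range_succ'] at h
  rw [h, ← Ico_add_one_right_eq_Icc, sum_Ico_eq_sum_range, add_comm]
  simp [add_comm 1, mul_assoc]

theorem cast_choose_mul_div_factorial (a k : ℕ) (hk : k ≤ a) (x : ℚ) :
    (a.choose k : ℚ) * x / a.factorial = 1 / k.factorial * (x / (a - k).factorial) := by
  rw [Nat.cast_choose ℚ hk]
  field_simp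

theorem Hpoly_one_recursion_general (m n : ℕ) (r : ℕ) (hr : 1 ≤ r) :
    (Hpoly r 1 m n =
      (1 / ((r - 1).factorial : ℚ)) * (Nat.ascFactorial m r) * (Nat.ascFactorial n r) -
        ∑ k ∈ Finset.Icc 1 (r - 1),
          (1 / (k.factorial : ℚ)) * (Nat.ascFactorial m k) * (Nat.ascFactorial n k) *
            Hpoly (r - k) 1 m n) ∧
    ((hSum r 1 m n : ℤ) =
      (Nat.ascFactorial m r : ℤ) * (Nat.ascFactorial n r : ℤ) -
        ∑ k ∈ Finset.Icc 1 (r - 1),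
          ((r - 1).choose k : ℤ) * (Nat.ascFactorial m k : ℤ) * (Nat.ascFactorial n k : ℤ) *
            (hSum (r - k) 1 m n : ℤ)) := by
  have key := hSum_one_add_sum_eq_ascFactorial_mul m n r hr
  have hQ : (hSum r 1 m n : ℚ) = m.ascFactorial r * n.ascFactorial r -
      ∑ k ∈ Icc 1 (r - 1), ((r - 1).choose k : ℚ) *
        (m.ascFactorial k * n.ascFactorial k * hSum (r - k) 1 m n) := by
    rw [eq_sub_iff_add_eq]
    simp only [← mul_assoc]
    exact_mod_cast key
  refine ⟨?_, by rw [eq_sub_iff_add_eq]; exact_mod_cast key⟩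
  rw [Hpoly, hQ, sub_div, sum_div]
  congr 1
  · ring
  · refine sum_congr rfl fun k hk => ?_
    rw [cast_choose_mul_div_factorial _ _ (mem_Icc.mp hk).2, Hpoly, Nat.sub_right_comm r 1 k]
    ring

/-- Recursion for the two-variable specialisation `H_r(1,m,n)`:
`H_r(1,m,n) = (1/(r-1)!) m^{(r)} n^{(r)} - Σ_{k=1}^{r-1} (1/k!) m^{(k)} n^{(k)} H_{r-k}(1,m,n)`,
together with its integer form
`h_r(1,m,n) = m^{(r)} n^{(r)} - Σ_{k=1}^{r-1} C(r-1,k) m^{(k)} n^{(k)} h_{r-k}(1,m,n)`. -/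
theorem Hpoly_one_recursion (m n : ℕ) (hm : 0 < m) (hn : 0 < n) (r : ℕ) (hr : 1 ≤ r) :
    (Hpoly r 1 m n =
      (1 / ((r - 1).factorial : ℚ)) * (Nat.ascFactorial m r) * (Nat.ascFactorial n r) -
        ∑ k ∈ Finset.Icc 1 (r - 1),
          (1 / (k.factorial : ℚ)) * (Nat.ascFactorial m k) * (Nat.ascFactorial n k) *
            Hpoly (r - k) 1 m n) ∧
    ((hSum r 1 m n : ℤ) =
      (Nat.ascFactorial m r : ℤ) * (Nat.ascFactorial n r : ℤ) -
        ∑ k ∈ Finset.Icc 1 (r - 1),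
          ((r - 1).choose k : ℤ) * (Nat.ascFactorial m k : ℤ) * (Nat.ascFactorial n k : ℤ) *
            (hSum (r - k) 1 m n : ℤ)) :=
  Hpoly_one_recursion_general m n r hr
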